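/- In U_q(g), for i ≠ j one has Σ_{r=0}^{1-A_ij} (-1)^r [1-A_ij choose r]_i (K_i^{-1} + F_i(q_i - q_i^{-1}))^{1-A_ij-r} F_j (K_i^{-1} + F_i(q_i - q_i^{-1}))^{r} = 0. -/

import Mathlib

open FreeAlgebra
open scoped TensorProduct

noncomputable section

/-- The field `𝕂(q)` of rational functions in the indeterminate `q` over `𝕂`. -/
abbrev Kq (K : Type) [Field K] : Type := RatFunc K

/-- The indeterminate `q` viewed as an element of `𝕂(q)`. -/
def qv (K : Type) [Field K] : Kq K := RatFunc.X

/-- `q_i = q^{d_i}`, given the exponent `di = d_i`. -/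
def qi (K : Type) [Field K] (di : ℕ) : Kq K := qv K ^ di

/-- The quantum integer `[m]_i = (q_i^m - q_i^{-m})/(q_i - q_i⁻¹)`. -/
def qnum (K : Type) [Field K] (di : ℕ) (m : ℤ) : Kq K :=
  (qi K di ^ m - qi K di ^ (-m)) / (qi K di - (qi K di)⁻¹)

/-- The quantum factorial `[m]_i! = [m]_i [m-1]_i ⋯ [1]_i`, with `[0]_i! = 1`. -/
def qfac (K : Type) [Field K] (di : ℕ) : ℕ → Kq K
  | 0 => 1
  | m + 1 => qnum K di (m + 1) * qfac K di m

/-- The Gaussian binomial coefficient `[m choose r]_i = [m]_i!/([r]_i![m-r]_i!)`. -/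
def qbin (K : Type) [Field K] (di m r : ℕ) : Kq K :=
  qfac K di m / (qfac K di r * qfac K di (m - r))

/-- Chevalley generators `E_i, F_i, K_i, K_i⁻¹` of `U_q(g)`. -/
inductive CGen (n : ℕ) : Type
  | E : Fin n → CGen n
  | F : Fin n → CGen n
  | K : Fin n → CGen n
  | Kinv : Fin n → CGen n

/-- The defining relations (R1)–(R7) of `U_q(g)` in the Chevalley presentation. -/
inductive CRel (K : Type) [Field K] {n : ℕ} (A : Matrix (Fin n) (Fin n) ℤ) (d : Fin n → ℕ) :
    FreeAlgebra (Kq K) (CGen n) → FreeAlgebra (Kq K) (CGen n) → Prop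
  | R1a (i : Fin n) : CRel K A d (ι (Kq K) (CGen.K i) * ι (Kq K) (CGen.Kinv i)) 1
  | R1b (i : Fin n) : CRel K A d (ι (Kq K) (CGen.Kinv i) * ι (Kq K) (CGen.K i)) 1
  | R2 (i j : Fin n) : CRel K A d (ι (Kq K) (CGen.K i) * ι (Kq K) (CGen.K j))
      (ι (Kq K) (CGen.K j) * ι (Kq K) (CGen.K i))
  | R3 (i j : Fin n) : CRel K A d
      (ι (Kq K) (CGen.K i) * ι (Kq K) (CGen.E j) * ι (Kq K) (CGen.Kinv i))
      (qi K (d i) ^ (A i j) • ι (Kq K) (CGen.E j))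
  | R4 (i j : Fin n) : CRel K A d
      (ι (Kq K) (CGen.K i) * ι (Kq K) (CGen.F j) * ι (Kq K) (CGen.Kinv i))
      (qi K (d i) ^ (-(A i j)) • ι (Kq K) (CGen.F j))
  | R5 (i j : Fin n) : CRel K A d
      (ι (Kq K) (CGen.E i) * ι (Kq K) (CGen.F j) - ι (Kq K) (CGen.F j) * ι (Kq K) (CGen.E i))
      (if i = j then (qi K (d i) - (qi K (d i))⁻¹)⁻¹ •
        (ι (Kq K) (CGen.K i) - ι (Kq K) (CGen.Kinv i)) else 0)
  | R6 (i j : Fin n) (hij : i ≠ j) : CRel K A d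
      (∑ r ∈ Finset.range ((1 - A i j).toNat + 1),
        ((-1 : Kq K) ^ r * qbin K (d i) (1 - A i j).toNat r) •
          (ι (Kq K) (CGen.E i) ^ ((1 - A i j).toNat - r) * ι (Kq K) (CGen.E j) *
            ι (Kq K) (CGen.E i) ^ r)) 0
  | R7 (i j : Fin n) (hij : i ≠ j) : CRel K A d
      (∑ r ∈ Finset.range ((1 - A i j).toNat + 1),
        ((-1 : Kq K) ^ r * qbin K (d i) (1 - A i j).toNat r) •
          (ι (Kq K) (CGen.F i) ^ ((1 - A i j).toNat - r) * ι (Kq K) (CGen.F j) *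
            ι (Kq K) (CGen.F i) ^ r)) 0

/-- The quantum group `U_q(g)` presented by generators and relations (R1)–(R7). -/
abbrev Uqg (K : Type) [Field K] {n : ℕ} (A : Matrix (Fin n) (Fin n) ℤ) (d : Fin n → ℕ) :=
  RingQuot (CRel K A d)

variable (K : Type) [Field K] {n : ℕ} (A : Matrix (Fin n) (Fin n) ℤ) (d : Fin n → ℕ)

def genE (i : Fin n) : Uqg K A d := RingQuot.mkAlgHom (Kq K) (CRel K A d) (ι (Kq K) (CGen.E i))
def genF (i : Fin n) : Uqg K A d := RingQuot.mkAlgHom (Kq K) (CRel K A d) (ι (Kq K) (CGen.F i))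
def genK (i : Fin n) : Uqg K A d := RingQuot.mkAlgHom (Kq K) (CRel K A d) (ι (Kq K) (CGen.K i))
def genKinv (i : Fin n) : Uqg K A d :=
  RingQuot.mkAlgHom (Kq K) (CRel K A d) (ι (Kq K) (CGen.Kinv i))

/-- Equitable generators `X_i, X_i⁻¹, Y_i, Z_i`. -/
inductive EGen (n : ℕ) : Type
  | X : Fin n → EGen n
  | Xinv : Fin n → EGen n
  | Y : Fin n → EGen n
  | Z : Fin n → EGen n

/-- The defining relations (E1)–(E8) of the equitable presentation. -/
inductive ERel (K : Type) [Field K] {n : ℕ} (A : Matrix (Fin n) (Fin n) ℤ) (d : Fin n → ℕ) :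
    FreeAlgebra (Kq K) (EGen n) → FreeAlgebra (Kq K) (EGen n) → Prop
  | E1a (i : Fin n) : ERel K A d (ι (Kq K) (EGen.X i) * ι (Kq K) (EGen.Xinv i)) 1
  | E1b (i : Fin n) : ERel K A d (ι (Kq K) (EGen.Xinv i) * ι (Kq K) (EGen.X i)) 1
  | E2 (i j : Fin n) : ERel K A d (ι (Kq K) (EGen.X i) * ι (Kq K) (EGen.X j))
      (ι (Kq K) (EGen.X j) * ι (Kq K) (EGen.X i))
  | E3 (i j : Fin n) : ERel K A d
      (ι (Kq K) (EGen.Y i) * ι (Kq K) (EGen.X j) -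
        qi K (d i) ^ (A i j) • (ι (Kq K) (EGen.X j) * ι (Kq K) (EGen.Y i)))
      ((1 - qi K (d i) ^ (A i j)) • (ι (Kq K) (EGen.Xinv i) * ι (Kq K) (EGen.X j)))
  | E4 (i j : Fin n) : ERel K A d
      (ι (Kq K) (EGen.X i) * ι (Kq K) (EGen.Z j) -
        qi K (d i) ^ (A i j) • (ι (Kq K) (EGen.Z j) * ι (Kq K) (EGen.X i)))
      ((1 - qi K (d i) ^ (A i j)) • (ι (Kq K) (EGen.X i) * ι (Kq K) (EGen.Xinv j)))
  | E5 (i : Fin n) : ERel K A d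
      (ι (Kq K) (EGen.Z i) * ι (Kq K) (EGen.Y i) -
        (qi K (d i) ^ 2) • (ι (Kq K) (EGen.Y i) * ι (Kq K) (EGen.Z i)))
      ((1 - qi K (d i) ^ 2) • 1)
  | E6 (i j : Fin n) (hij : i ≠ j) : ERel K A d
      (ι (Kq K) (EGen.Z i) * ι (Kq K) (EGen.Y j) -
        qi K (d i) ^ (A i j) • (ι (Kq K) (EGen.Y j) * ι (Kq K) (EGen.Z i)))
      ((1 - qi K (d i) ^ (A i j)) • (ι (Kq K) (EGen.Xinv i) * ι (Kq K) (EGen.Xinv j)))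
  | E7 (i j : Fin n) (hij : i ≠ j) : ERel K A d
      (∑ r ∈ Finset.range ((1 - A i j).toNat + 1),
        ((-1 : Kq K) ^ r * qbin K (d i) (1 - A i j).toNat r) •
          (ι (Kq K) (EGen.Y i) ^ ((1 - A i j).toNat - r) * ι (Kq K) (EGen.Y j) *
            ι (Kq K) (EGen.Y i) ^ r))
      ((∏ s ∈ Finset.range ((-(A i j)).toNat + 1), (1 - qi K (d i) ^ (A i j + 2 * (s : ℤ)))) •
        (ι (Kq K) (EGen.Xinv i) ^ (1 - A i j).toNat * ι (Kq K) (EGen.Xinv j)))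
  | E8 (i j : Fin n) (hij : i ≠ j) : ERel K A d
      (∑ r ∈ Finset.range ((1 - A i j).toNat + 1),
        ((-1 : Kq K) ^ r * qbin K (d i) (1 - A i j).toNat r) •
          (ι (Kq K) (EGen.Z i) ^ ((1 - A i j).toNat - r) * ι (Kq K) (EGen.Z j) *
            ι (Kq K) (EGen.Z i) ^ r))
      ((∏ s ∈ Finset.range ((-(A i j)).toNat + 1), (1 - qi K (d i) ^ (A i j + 2 * (s : ℤ)))) •
        (ι (Kq K) (EGen.Xinv i) ^ (1 - A i j).toNat * ι (Kq K) (EGen.Xinv j)))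

/-- The equitable algebra `U` presented by generators and relations (E1)–(E8). -/
abbrev Ueqg (K : Type) [Field K] {n : ℕ} (A : Matrix (Fin n) (Fin n) ℤ) (d : Fin n → ℕ) :=
  RingQuot (ERel K A d)

def genX (i : Fin n) : Ueqg K A d := RingQuot.mkAlgHom (Kq K) (ERel K A d) (ι (Kq K) (EGen.X i))
def genXinv (i : Fin n) : Ueqg K A d :=
  RingQuot.mkAlgHom (Kq K) (ERel K A d) (ι (Kq K) (EGen.Xinv i))
def genY (i : Fin n) : Ueqg K A d := RingQuot.mkAlgHom (Kq K) (ERel K A d) (ι (Kq K) (EGen.Y i))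
def genZ (i : Fin n) : Ueqg K A d := RingQuot.mkAlgHom (Kq K) (ERel K A d) (ι (Kq K) (EGen.Z i))

/-- `A` is a symmetrizable generalized Cartan matrix with symmetrizing positive,
relatively prime integers `d_i`, and `n ≥ 1`. -/
def IsSymmetrizableGCM {n : ℕ} (A : Matrix (Fin n) (Fin n) ℤ) (d : Fin n → ℕ) : Prop :=
  0 < n ∧ (∀ i, A i i = 2) ∧ (∀ i j, i ≠ j → A i j ≤ 0) ∧
    (∀ i, 0 < d i) ∧ Finset.univ.gcd d = 1 ∧
    (∀ i j, (d i : ℤ) * A i j = (d j : ℤ) * A j i)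

end

/-!
Write `L = K_i⁻¹`, `v = (q_i - q_i⁻¹) F_i`, `a = A_ij` and `N = 1 - a`; then `L v = q_i² v L`
and `L F_j = q_i^a F_j L`. By a q-Pascal induction, the Serre sum
`Σ_r (-1)^r [N choose r]_i x^(N-r) F_j x^r` is the iterated twisted commutator `S_N(x)`, where
`S_0 = F_j` and `S_(m+1) = x S_m - q_i^(a+2m) S_m x` (the general expansion carries factors
`q_i^(r(a+N-1))`, which are `1` exactly because `N = 1 - a`). Since `L S_m = q_i^(a+2m) S_m L`,
the `L`-part of `x = L + v` cancels in every step, so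
`S_N(L + v) = S_N(v) = (q_i - q_i⁻¹)^N S_N(F_i)`, which vanishes by (R7).
-/

section QuantumNumbers

variable (K : Type) [Field K]

theorem qi_ne_zero (di : ℕ) : qi K di ≠ 0 := pow_ne_zero _ RatFunc.X_ne_zero

theorem qv_pow_ne_one {k : ℕ} (hk : k ≠ 0) : qv K ^ k ≠ 1 := by
  intro h
  have hX : (Polynomial.X : Polynomial K) ^ k = 1 := by
    apply RatFunc.algebraMap_injective K
    simpa [RatFunc.algebraMap_X, qv] using h
  simpa [hk] using congrArg Polynomial.natDegree hX

theorem qi_zpow_sub_zpow_neg_ne_zero {di k : ℕ} (hdi : 0 < di) (hk : 0 < k) :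
    qi K di ^ (k : ℤ) - qi K di ^ (-(k : ℤ)) ≠ 0 := by
  intro h
  have h2k : qi K di ^ (k + k) = 1 := by
    rw [pow_add, ← zpow_natCast]
    nth_rw 2 [sub_eq_zero.mp h]
    rw [← zpow_add₀ (qi_ne_zero K di), add_neg_cancel, zpow_zero]
  rw [qi, ← pow_mul] at h2k
  exact qv_pow_ne_one K (by positivity) h2k

theorem qnum_natCast_ne_zero {di m : ℕ} (hdi : 0 < di) (hm : 0 < m) : qnum K di m ≠ 0 := by
  have hden := qi_zpow_sub_zpow_neg_ne_zero K hdi one_pos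
  rw [Nat.cast_one, zpow_one, zpow_neg_one] at hden
  exact div_ne_zero (qi_zpow_sub_zpow_neg_ne_zero K hdi hm) hden

theorem qnum_add (di : ℕ) (a b : ℤ) :
    qnum K di (a + b) = qi K di ^ (-a) * qnum K di b + qi K di ^ b * qnum K di a := by
  have ht := qi_ne_zero K di
  simp only [qnum, mul_div_assoc', ← add_div, neg_add, zpow_add₀ ht]
  ring

theorem qfac_ne_zero {di : ℕ} (hdi : 0 < di) (m : ℕ) : qfac K di m ≠ 0 := by
  induction m with
  | zero => exact one_ne_zero
  | succ m ih => exact mul_ne_zero (by exact_mod_cast qnum_natCast_ne_zero K hdi m.succ_pos) ih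

theorem qbin_zero_right {di : ℕ} (hdi : 0 < di) (m : ℕ) : qbin K di m 0 = 1 := by
  simp [qbin, qfac, qfac_ne_zero K hdi]

theorem qbin_self {di : ℕ} (hdi : 0 < di) (m : ℕ) : qbin K di m m = 1 := by
  simp [qbin, qfac, qfac_ne_zero K hdi]

theorem qbin_succ_succ {di : ℕ} (hdi : 0 < di) {m r : ℕ} (h : r < m) :
    qbin K di (m + 1) (r + 1) =
      qi K di ^ (-((r : ℤ) + 1)) * qbin K di m (r + 1) +
        qi K di ^ ((m : ℤ) - r) * qbin K di m r := by
  obtain ⟨k, rfl⟩ : ∃ k, m = r + 1 + k := ⟨m - (r + 1), by omega⟩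
  have hsplit := qnum_add K di ((r : ℤ) + 1) ((k : ℤ) + 1)
  simp only [qbin, show r + 1 + k + 1 - (r + 1) = k + 1 by omega,
    show r + 1 + k - (r + 1) = k by omega, show r + 1 + k - r = k + 1 by omega, qfac]
  have hfac := qfac_ne_zero K hdi
  have hr := qnum_natCast_ne_zero K hdi (Nat.succ_pos r)
  have hk := qnum_natCast_ne_zero K hdi (Nat.succ_pos k)
  push_cast at hr hk ⊢
  field_simp
  rw [show (r : ℤ) + 1 + k - r = k + 1 by ring,
    show (r : ℤ) + 1 + k + 1 = r + 1 + (k + 1) by ring, hsplit]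
  ring

end QuantumNumbers

section TwistedAd

variable {F R : Type*} [Field F] [Ring R] [Algebra F R]

def qAdPow (t : F) (b : ℤ) (x G : R) : ℕ → R
  | 0 => G
  | m + 1 => x * qAdPow t b x G m - t ^ (b + 2 * (m : ℤ)) • (qAdPow t b x G m * x)

theorem mul_qAdPow_of_qcomm {t : F} (ht : t ≠ 0) (b c : ℤ) {L x G : R}
    (hx : L * x = t ^ (2 : ℤ) • (x * L)) (hG : L * G = t ^ c • (G * L)) (m : ℕ) :
    L * qAdPow t b x G m = t ^ (c + 2 * (m : ℤ)) • (qAdPow t b x G m * L) := by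
  induction m with
  | zero => simpa [qAdPow] using hG
  | succ m ih =>
    set S := qAdPow t b x G m
    have hxS : L * (x * S) = t ^ (c + 2 * ((m + 1 : ℕ) : ℤ)) • (x * S * L) := by
      rw [← mul_assoc, hx, smul_mul_assoc, mul_assoc, ih, mul_smul_comm, smul_smul,
        ← mul_assoc, ← zpow_add₀ ht]
      congr 2
      push_cast
      ring
    have hSx : L * (S * x) = t ^ (c + 2 * ((m + 1 : ℕ) : ℤ)) • (S * x * L) := by
      rw [← mul_assoc, ih, smul_mul_assoc, mul_assoc, hx, mul_smul_comm, smul_smul,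
        ← mul_assoc, ← zpow_add₀ ht]
      congr 2
      push_cast
      ring
    change L * (x * S - _ • (S * x)) = _ • ((x * S - _ • (S * x)) * L)
    rw [mul_sub, mul_smul_comm, hxS, hSx, sub_mul, smul_mul_assoc, smul_sub, smul_comm]

theorem qAdPow_add_of_qcomm {t : F} (ht : t ≠ 0) (b : ℤ) {L v G : R}
    (hv : L * v = t ^ (2 : ℤ) • (v * L)) (hG : L * G = t ^ b • (G * L)) (m : ℕ) :
    qAdPow t b (L + v) G m = qAdPow t b v G m := by
  induction m with
  | zero => rfl
  | succ m ih =>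
    simp only [qAdPow, ih, add_mul, mul_add, smul_add, mul_qAdPow_of_qcomm ht b b hv hG m]
    abel

end TwistedAd

section SerreCoeff

variable (K : Type) [Field K]

-- `qbin m r` is not `0` for `r > m` (the subtraction `m - r` truncates), hence the cut-off.
noncomputable def serreCoeff (di : ℕ) (b : ℤ) (m r : ℕ) : Kq K :=
  (-1) ^ r * qi K di ^ ((r : ℤ) * (b + m - 1)) * if r ≤ m then qbin K di m r else 0

variable {K}

theorem serreCoeff_zero_right {di : ℕ} (hdi : 0 < di) (b : ℤ) (m : ℕ) :
    serreCoeff K di b m 0 = 1 := by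
  simp [serreCoeff, qbin_zero_right K hdi]

theorem serreCoeff_of_lt (di : ℕ) (b : ℤ) {m r : ℕ} (h : m < r) :
    serreCoeff K di b m r = 0 := by
  simp [serreCoeff, Nat.not_le.mpr h]

theorem serreCoeff_succ_succ {di : ℕ} (hdi : 0 < di) (b : ℤ) (m r : ℕ) :
    serreCoeff K di b (m + 1) (r + 1) =
      serreCoeff K di b m (r + 1) - qi K di ^ (b + 2 * (m : ℤ)) * serreCoeff K di b m r := by
  have ht := qi_ne_zero K di
  rcases lt_trichotomy r m with h | rfl | h
  · rw [serreCoeff, serreCoeff, serreCoeff, if_pos (by omega), if_pos (by omega), if_pos h.le,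
      qbin_succ_succ K hdi h]
    have e1 : qi K di ^ (((r + 1 : ℕ) : ℤ) * (b + ((m + 1 : ℕ) : ℤ) - 1)) *
        qi K di ^ (-((r : ℤ) + 1)) = qi K di ^ (((r + 1 : ℕ) : ℤ) * (b + m - 1)) := by
      rw [← zpow_add₀ ht]; congr 1; push_cast; ring
    have e2 : qi K di ^ (((r + 1 : ℕ) : ℤ) * (b + ((m + 1 : ℕ) : ℤ) - 1)) *
        qi K di ^ ((m : ℤ) - r) =
          qi K di ^ (b + 2 * (m : ℤ)) * qi K di ^ ((r : ℤ) * (b + m - 1)) := by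
      rw [← zpow_add₀ ht, ← zpow_add₀ ht]; congr 1; push_cast; ring
    linear_combination ((-1) ^ (r + 1) * qbin K di m (r + 1)) * e1 +
      ((-1) ^ (r + 1) * qbin K di m r) * e2
  · rw [serreCoeff, serreCoeff, serreCoeff, if_pos le_rfl, if_neg (by omega), if_pos le_rfl,
      qbin_self K hdi, qbin_self K hdi]
    have e : qi K di ^ (((r + 1 : ℕ) : ℤ) * (b + ((r + 1 : ℕ) : ℤ) - 1))
        = qi K di ^ (b + 2 * (r : ℤ)) * qi K di ^ ((r : ℤ) * (b + r - 1)) := by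
      rw [← zpow_add₀ ht]; congr 1; push_cast; ring
    linear_combination (-1) ^ (r + 1) * e
  · simp [serreCoeff_of_lt _ _ h, serreCoeff_of_lt _ _ (Nat.succ_lt_succ h),
      serreCoeff_of_lt _ _ (h.trans (Nat.lt_succ_self r))]

end SerreCoeff

section SerreSum

variable (K : Type) [Field K] {R : Type*} [Ring R] [Algebra (Kq K) R]

theorem qAdPow_eq_sum {di : ℕ} (hdi : 0 < di) (b : ℤ) (x G : R) (m : ℕ) :
    qAdPow (qi K di) b x G m =
      ∑ r ∈ Finset.range (m + 1), serreCoeff K di b m r • (x ^ (m - r) * G * x ^ r) := by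
  induction m with
  | zero => simp [qAdPow, serreCoeff_zero_right hdi]
  | succ m ih =>
    have hleft : x * qAdPow (qi K di) b x G m = ∑ r ∈ Finset.range (m + 2),
        serreCoeff K di b m r • (x ^ (m + 1 - r) * G * x ^ r) := by
      rw [ih, Finset.mul_sum, Finset.sum_range_succ _ (m + 1),
        serreCoeff_of_lt di b (Nat.lt_succ_self m), zero_smul, add_zero]
      refine Finset.sum_congr rfl fun r hr => ?_
      rw [mul_smul_comm, ← mul_assoc, ← mul_assoc, ← pow_succ',
        Nat.sub_add_comm (Nat.lt_succ_iff.mp (Finset.mem_range.mp hr))]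
    have hright : qAdPow (qi K di) b x G m * x = ∑ r ∈ Finset.range (m + 1),
        serreCoeff K di b m r • (x ^ (m - r) * G * x ^ (r + 1)) := by
      rw [ih, Finset.sum_mul]
      refine Finset.sum_congr rfl fun r _ => ?_
      rw [smul_mul_assoc, mul_assoc, ← pow_succ]
    rw [qAdPow, hleft, hright, Finset.sum_range_succ' _ (m + 1),
      Finset.sum_range_succ' _ (m + 1)]
    simp only [serreCoeff_succ_succ hdi, serreCoeff_zero_right hdi, sub_smul, mul_smul,
      Finset.sum_sub_distrib, Finset.smul_sum, Nat.add_sub_add_right]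
    abel

noncomputable def serreSum (di N : ℕ) (x G : R) : R :=
  ∑ r ∈ Finset.range (N + 1), ((-1 : Kq K) ^ r * qbin K di N r) • (x ^ (N - r) * G * x ^ r)

variable {K}

theorem serreSum_smul_left (di N : ℕ) (c : Kq K) (x G : R) :
    serreSum K di N (c • x) G = c ^ N • serreSum K di N x G := by
  rw [serreSum, serreSum, Finset.smul_sum]
  refine Finset.sum_congr rfl fun r hr => ?_
  rw [smul_pow, smul_pow, smul_mul_assoc, mul_smul_comm, smul_mul_assoc, smul_smul, smul_smul,
    smul_smul, mul_assoc _ (c ^ r), ← pow_add,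
    Nat.add_sub_cancel' (Nat.lt_succ_iff.mp (Finset.mem_range.mp hr)), mul_comm (c ^ N)]

theorem serreSum_eq_qAdPow {di : ℕ} (hdi : 0 < di) {b : ℤ} {N : ℕ} (hN : (N : ℤ) = 1 - b)
    (x G : R) : serreSum K di N x G = qAdPow (qi K di) b x G N := by
  rw [serreSum, qAdPow_eq_sum K hdi]
  refine Finset.sum_congr rfl fun r hr => ?_
  rw [serreCoeff, if_pos (Nat.lt_succ_iff.mp (Finset.mem_range.mp hr)),
    show (r : ℤ) * (b + N - 1) = 0 by rw [hN]; ring, zpow_zero, mul_one]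

theorem serreSum_add_of_qcomm {di : ℕ} (hdi : 0 < di) {b : ℤ} {N : ℕ} (hN : (N : ℤ) = 1 - b)
    {L v G : R} (hv : L * v = qi K di ^ (2 : ℤ) • (v * L))
    (hG : L * G = qi K di ^ b • (G * L)) :
    serreSum K di N (L + v) G = serreSum K di N v G := by
  rw [serreSum_eq_qAdPow hdi hN, serreSum_eq_qAdPow hdi hN,
    qAdPow_add_of_qcomm (qi_ne_zero K di) b hv hG]

end SerreSum

section QuantumGroup

variable (K : Type) [Field K] {n : ℕ} (A : Matrix (Fin n) (Fin n) ℤ) (d : Fin n → ℕ)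

theorem genKinv_mul_genK (i : Fin n) : genKinv K A d i * genK K A d i = 1 := by
  simpa [genK, genKinv] using RingQuot.mkAlgHom_rel (Kq K) (CRel.R1b (K := K) (A := A) (d := d) i)

theorem genK_mul_genF_mul_genKinv (i j : Fin n) :
    genK K A d i * genF K A d j * genKinv K A d i = qi K (d i) ^ (-A i j) • genF K A d j := by
  simpa [genK, genF, genKinv] using
    RingQuot.mkAlgHom_rel (Kq K) (CRel.R4 (K := K) (A := A) (d := d) i j)

theorem genKinv_mul_genF (i j : Fin n) :
    genKinv K A d i * genF K A d j = qi K (d i) ^ A i j • (genF K A d j * genKinv K A d i) := by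
  have hFKinv : genF K A d j * genKinv K A d i =
      qi K (d i) ^ (-A i j) • (genKinv K A d i * genF K A d j) := by
    rw [← mul_smul_comm, ← genK_mul_genF_mul_genKinv, ← mul_assoc, ← mul_assoc,
      genKinv_mul_genK, one_mul]
  rw [hFKinv, smul_smul, ← zpow_add₀ (qi_ne_zero K _), add_neg_cancel, zpow_zero, one_smul]

theorem serreSum_genF {i j : Fin n} (hij : i ≠ j) :
    serreSum K (d i) (1 - A i j).toNat (genF K A d i) (genF K A d j) = 0 := by
  simpa [serreSum, genF] using
    RingQuot.mkAlgHom_rel (Kq K) (CRel.R7 (K := K) (A := A) (d := d) i j hij)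

end QuantumGroup

/-- In `U_q(g)`, for `i ≠ j`,
`Σ_{r=0}^{1-A_ij} (-1)^r [1-A_ij choose r]_i Ŷ_i^{1-A_ij-r} F_j Ŷ_i^r = 0`
where `Ŷ_i = K_i⁻¹ + F_i(q_i - q_i⁻¹)`. -/
theorem serre_sum_middle_F (K : Type) [Field K] {n : ℕ}
    (A : Matrix (Fin n) (Fin n) ℤ) (d : Fin n → ℕ) (hA : IsSymmetrizableGCM A d)
    (i j : Fin n) (hij : i ≠ j) :
    ∑ r ∈ Finset.range ((1 - A i j).toNat + 1),
      ((-1 : Kq K) ^ r * qbin K (d i) (1 - A i j).toNat r) •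
        ((genKinv K A d i + (qi K (d i) - (qi K (d i))⁻¹) • genF K A d i) ^
            ((1 - A i j).toNat - r) *
          genF K A d j *
          (genKinv K A d i + (qi K (d i) - (qi K (d i))⁻¹) • genF K A d i) ^ r) = 0 := by
  obtain ⟨-, hAii, hAneg, hdpos, -, -⟩ := hA
  have hN : ((1 - A i j).toNat : ℤ) = 1 - A i j :=
    Int.toNat_of_nonneg (by linarith [hAneg i j hij])
  set c : Kq K := qi K (d i) - (qi K (d i))⁻¹
  have hv : genKinv K A d i * (c • genF K A d i) =
      qi K (d i) ^ (2 : ℤ) • (c • genF K A d i * genKinv K A d i) := by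
    rw [mul_smul_comm, genKinv_mul_genF, hAii, smul_mul_assoc, smul_comm]
  change serreSum K (d i) _ (genKinv K A d i + _) (genF K A d j) = 0
  rw [serreSum_add_of_qcomm (hdpos i) hN hv (genKinv_mul_genF K A d i j), serreSum_smul_left,
    serreSum_genF K A d hij, smul_zero]
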